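/- arXiv:2208.07355 — 2 statements merged into one kernel-verified Lean document; each statement's English description precedes it below -/
import Mathlib

section
/- Let α, R > 0, c ∈ ℝ, and set ψ(x) = x/R + c. For a smooth function f: ℝ → ℂ define the conjugated operator T f = e^{αψ²} · d⁴/dx⁴ (e^{-αψ²} f). Then T f = S f + A f, where S f = f'''' + (24α²ψ²/R²) f'' + (48α²ψ/R³) f' + (16α⁴ψ⁴/R⁴ + 12α²/R⁴) f is formally symmetric and A f = −(8αψ/R) f''' − (12α/R²) f'' − (32α³ψ³/R³) f' − (48α³ψ²/R⁴) f is formally anti-symmetric; that is, for compactly supported smooth f, g one has ∫ (S f) ḡ = ∫ f (overline{S g}) and ∫ (A f) ḡ = −∫ f (overline{A g}). -/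
open Complex MeasureTheory

/-- The formally symmetric part `S` of the conjugated operator. -/
noncomputable def Sop (α R c : ℝ) (f : ℝ → ℂ) : ℝ → ℂ := fun x =>
  iteratedDeriv 4 f x
    + ((24 * α ^ 2 * (x / R + c) ^ 2 / R ^ 2 : ℝ) : ℂ) * iteratedDeriv 2 f x
    + ((48 * α ^ 2 * (x / R + c) / R ^ 3 : ℝ) : ℂ) * deriv f x
    + ((16 * α ^ 4 * (x / R + c) ^ 4 / R ^ 4 + 12 * α ^ 2 / R ^ 4 : ℝ) : ℂ) * f x

/-- The formally anti-symmetric part `A` of the conjugated operator. -/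
noncomputable def Aop (α R c : ℝ) (f : ℝ → ℂ) : ℝ → ℂ := fun x =>
  -(((8 * α * (x / R + c) / R : ℝ) : ℂ)) * iteratedDeriv 3 f x
    - ((12 * α / R ^ 2 : ℝ) : ℂ) * iteratedDeriv 2 f x
    - ((32 * α ^ 3 * (x / R + c) ^ 3 / R ^ 3 : ℝ) : ℂ) * deriv f x
    - ((48 * α ^ 3 * (x / R + c) ^ 2 / R ^ 4 : ℝ) : ℂ) * f x

/-! ### Auxiliary lemmas -/

lemma hasDerivAt_ofReal' (x : ℝ) : HasDerivAt (fun y : ℝ => (y : ℂ)) 1 x := by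
  simpa using (hasDerivAt_id x).ofReal_comp

lemma hd_iter {f : ℝ → ℂ} (hf : ContDiff ℝ (⊤ : ℕ∞) f) (k : ℕ) (x : ℝ) :
    HasDerivAt (iteratedDeriv k f) (iteratedDeriv (k+1) f x) x := by
  rw [iteratedDeriv_succ]
  exact ((hf.differentiable_iteratedDeriv k (WithTop.coe_lt_coe.mpr (ENat.coe_lt_top k))) x).hasDerivAt

lemma hd_iter' {f : ℝ → ℂ} (hf : ContDiff ℝ (⊤ : ℕ∞) f) (k k' : ℕ) (hk : k + 1 = k') (x : ℝ) :
    HasDerivAt (iteratedDeriv k f) (iteratedDeriv k' f x) x := hk ▸ hd_iter hf k x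

lemma conj_hasDerivAt {u : ℝ → ℂ} {u' : ℂ} {x : ℝ} (h : HasDerivAt u u' x) :
    HasDerivAt (fun y => (starRingEnd ℂ) (u y)) ((starRingEnd ℂ) u') x := h.star

lemma cont_conj {u : ℝ → ℂ} (hu : Continuous u) :
    Continuous (fun x => (starRingEnd ℂ) (u x)) := hu.star

lemma hcs_neg {f : ℝ → ℂ} (hf : HasCompactSupport f) : HasCompactSupport (fun x => -f x) :=
  hf.mono (by intro x hx; simp only [Function.mem_support] at *; simpa using hx)

lemma hcs_sub {f g : ℝ → ℂ} (hf : HasCompactSupport f) (hg : HasCompactSupport g) :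
    HasCompactSupport (fun x => f x - g x) := by
  have h : (fun x => f x - g x) = (fun x => f x + (-g x)) := by funext x; ring
  rw [h]; exact hf.add (hcs_neg hg)

lemma hcs_iter {g : ℝ → ℂ} (hsg : HasCompactSupport g) (k : ℕ) :
    HasCompactSupport (iteratedDeriv k g) := by
  induction k with
  | zero => simpa [iteratedDeriv_zero] using hsg
  | succ n ih => rw [iteratedDeriv_succ]; exact ih.deriv

lemma integral_deriv_zero {G G' : ℝ → ℂ}
    (hd : ∀ x, HasDerivAt G (G' x) x) (hc : Continuous G')
    (hs : HasCompactSupport G) : ∫ x : ℝ, G' x = 0 := by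
  have hderiv : deriv G = G' := funext fun x => (hd x).deriv
  have h1 : ContDiff ℝ 1 G := contDiff_one_iff_deriv.mpr
    ⟨fun x => (hd x).differentiableAt, hderiv ▸ hc⟩
  have hi : Integrable G' := hc.integrable_of_hasCompactSupport (hderiv ▸ hs.deriv)
  have h2 := hs.integral_Iic_deriv_eq h1 0
  have h3 := hs.integral_Ioi_deriv_eq h1 0
  rw [hderiv] at h2 h3
  rw [← intervalIntegral.integral_Iic_add_Ioi hi.integrableOn hi.integrableOn, h2, h3]
  ring

noncomputable def Cm (α R c : ℝ) : ℝ → ℂ := fun x => 2*(α:ℂ)*((x:ℂ)/(R:ℂ)+(c:ℂ))/(R:ℂ)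
noncomputable def Cw (α R c : ℝ) : ℝ → ℂ :=
  fun x => Complex.exp (-((α:ℂ)*((x:ℂ)/(R:ℂ)+(c:ℂ))^2))

lemma hasDerivAt_Cm (α R c : ℝ) (x : ℝ) :
    HasDerivAt (Cm α R c) (2*(α:ℂ)/(R:ℂ)^2) x := by
  have h := ((((hasDerivAt_ofReal' x).div_const (R:ℂ)).add_const (c:ℂ)).const_mul
    (2*(α:ℂ))).div_const (R:ℂ)
  refine h.congr_deriv ?_
  ring

lemma hasDerivAt_Cm2 (α R c : ℝ) (x : ℝ) :
    HasDerivAt (fun z => (Cm α R c z)^2) ((2:ℂ) * Cm α R c x * (2*(α:ℂ)/(R:ℂ)^2)) x := by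
  simpa [Function.comp_def] using (hasDerivAt_pow 2 (Cm α R c x)).comp x (hasDerivAt_Cm α R c x)

lemma hasDerivAt_Cm3 (α R c : ℝ) (x : ℝ) :
    HasDerivAt (fun z => (Cm α R c z)^3) ((3:ℂ) * (Cm α R c x)^2 * (2*(α:ℂ)/(R:ℂ)^2)) x := by
  simpa [Function.comp_def] using (hasDerivAt_pow 3 (Cm α R c x)).comp x (hasDerivAt_Cm α R c x)

lemma hasDerivAt_Cw (α R c : ℝ) (x : ℝ) :
    HasDerivAt (Cw α R c) (-(Cm α R c x) * Cw α R c x) x := by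
  have hpsi : HasDerivAt (fun z : ℝ => (z:ℂ)/(R:ℂ)+(c:ℂ)) (1/(R:ℂ)) x :=
    ((hasDerivAt_ofReal' x).div_const (R:ℂ)).add_const (c:ℂ)
  have hsq : HasDerivAt (fun z : ℝ => ((z:ℂ)/(R:ℂ)+(c:ℂ))^2)
      ((2:ℂ) * ((x:ℂ)/(R:ℂ)+(c:ℂ)) * (1/(R:ℂ))) x := by
    simpa [Function.comp_def] using (hasDerivAt_pow 2 ((x:ℂ)/(R:ℂ)+(c:ℂ))).comp x hpsi
  have h := ((hsq.const_mul (α:ℂ)).neg).cexp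
  refine h.congr_deriv ?_
  simp only [Cm, Cw, Pi.neg_apply]
  ring

noncomputable def P1 (α R c : ℝ) (f : ℝ → ℂ) : ℝ → ℂ := fun y =>
  Cw α R c y * (iteratedDeriv 1 f y - Cm α R c y * f y)

noncomputable def P2 (α R c : ℝ) (f : ℝ → ℂ) : ℝ → ℂ := fun y =>
  Cw α R c y * (iteratedDeriv 2 f y - 2 * Cm α R c y * iteratedDeriv 1 f y
    + ((Cm α R c y)^2 - 2*(α:ℂ)/(R:ℂ)^2) * f y)

noncomputable def P3 (α R c : ℝ) (f : ℝ → ℂ) : ℝ → ℂ := fun y =>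
  Cw α R c y * (iteratedDeriv 3 f y - 3 * Cm α R c y * iteratedDeriv 2 f y
    + (3*(Cm α R c y)^2 - 3*(2*(α:ℂ)/(R:ℂ)^2)) * iteratedDeriv 1 f y
    + (-(Cm α R c y)^3 + 3*(2*(α:ℂ)/(R:ℂ)^2)*(Cm α R c y)) * f y)

noncomputable def P4 (α R c : ℝ) (f : ℝ → ℂ) : ℝ → ℂ := fun y =>
  Cw α R c y * (iteratedDeriv 4 f y - 4 * Cm α R c y * iteratedDeriv 3 f y
    + (6*(Cm α R c y)^2 - 6*(2*(α:ℂ)/(R:ℂ)^2)) * iteratedDeriv 2 f y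
    + (-(4:ℂ)*(Cm α R c y)^3 + 12*(2*(α:ℂ)/(R:ℂ)^2)*(Cm α R c y)) * iteratedDeriv 1 f y
    + ((Cm α R c y)^4 - 6*(2*(α:ℂ)/(R:ℂ)^2)*(Cm α R c y)^2 + 3*(2*(α:ℂ)/(R:ℂ)^2)^2) * f y)

lemma iteratedDeriv4_Cw_mul (α R c : ℝ) {f : ℝ → ℂ} (hf : ContDiff ℝ (⊤ : ℕ∞) f) :
    iteratedDeriv 4 (fun y => Cw α R c y * f y) = P4 α R c f := by
  have hdf : ∀ k y, HasDerivAt (iteratedDeriv k f) (iteratedDeriv (k+1) f y) y := hd_iter hf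
  have hdf0 : ∀ y, HasDerivAt f (iteratedDeriv 1 f y) y := by
    intro y; simpa [iteratedDeriv_zero] using hdf 0 y
  have h0 : ∀ y, HasDerivAt (fun z => Cw α R c z * f z) (P1 α R c f y) y := by
    intro y
    have h := (hasDerivAt_Cw α R c y).mul (hdf0 y)
    refine h.congr_deriv ?_
    simp only [P1]; ring
  have h1 : ∀ y, HasDerivAt (P1 α R c f) (P2 α R c f y) y := by
    intro y
    have h := (hasDerivAt_Cw α R c y).mul
      ((hdf 1 y).sub ((hasDerivAt_Cm α R c y).mul (hdf0 y)))
    refine h.congr_deriv ?_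
    simp only [P1, P2]
    norm_num
    ring
  have h2 : ∀ y, HasDerivAt (P2 α R c f) (P3 α R c f y) y := by
    intro y
    have hm := hasDerivAt_Cm α R c y
    have hm2 := hasDerivAt_Cm2 α R c y
    have h := (hasDerivAt_Cw α R c y).mul
      (((hdf 2 y).sub ((hm.const_mul 2).mul (hdf 1 y))).add
        ((hm2.sub_const (2*(α:ℂ)/(R:ℂ)^2)).mul (hdf0 y)))
    refine h.congr_deriv ?_
    simp only [P2, P3]
    norm_num
    ring
  have h3 : ∀ y, HasDerivAt (P3 α R c f) (P4 α R c f y) y := by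
    intro y
    have hm := hasDerivAt_Cm α R c y
    have hm2 := hasDerivAt_Cm2 α R c y
    have hm3 := hasDerivAt_Cm3 α R c y
    have h := (hasDerivAt_Cw α R c y).mul
      ((((hdf 3 y).sub ((hm.const_mul 3).mul (hdf 2 y))).add
        (((hm2.const_mul 3).sub_const (3*(2*(α:ℂ)/(R:ℂ)^2))).mul (hdf 1 y))).add
        (((hm3.neg).add ((hm.const_mul (3*(2*(α:ℂ)/(R:ℂ)^2))))).mul (hdf0 y)))
    refine h.congr_deriv ?_
    simp only [P3, P4]
    norm_num
    ring
  have e0 : deriv (fun z => Cw α R c z * f z) = P1 α R c f := funext fun y => (h0 y).deriv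
  have e1 : deriv (P1 α R c f) = P2 α R c f := funext fun y => (h1 y).deriv
  have e2 : deriv (P2 α R c f) = P3 α R c f := funext fun y => (h2 y).deriv
  have e3 : deriv (P3 α R c f) = P4 α R c f := funext fun y => (h3 y).deriv
  rw [show (4:ℕ) = 3+1 from rfl, iteratedDeriv_succ,
      show (3:ℕ) = 2+1 from rfl, iteratedDeriv_succ,
      show (2:ℕ) = 1+1 from rfl, iteratedDeriv_succ, iteratedDeriv_one,
      e0, e1, e2, e3]

lemma part1 (α R c : ℝ) {f : ℝ → ℂ} (hf : ContDiff ℝ (⊤ : ℕ∞) f) (x : ℝ) :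
    Complex.exp ((α * (x / R + c) ^ 2 : ℝ) : ℂ) *
      iteratedDeriv 4 (fun y => Complex.exp (-((α * (y / R + c) ^ 2 : ℝ) : ℂ)) * f y) x
      = Sop α R c f x + Aop α R c f x := by
  have hfun : (fun y => Complex.exp (-((α * (y / R + c) ^ 2 : ℝ) : ℂ)) * f y)
      = fun y => Cw α R c y * f y := by
    funext y
    simp only [Cw]
    congr 2
    push_cast
    ring
  rw [hfun, iteratedDeriv4_Cw_mul α R c hf]
  have hexp : Complex.exp (((α * (x / R + c) ^ 2 : ℝ) : ℂ)) * Cw α R c x = 1 := by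
    rw [Cw, ← Complex.exp_add]
    rw [show (((α * (x / R + c) ^ 2 : ℝ) : ℂ) + -((α:ℂ)*((x:ℂ)/(R:ℂ)+(c:ℂ))^2)) = 0 by
      push_cast; ring]
    exact Complex.exp_zero
  calc Complex.exp (((α * (x / R + c) ^ 2 : ℝ) : ℂ)) * P4 α R c f x
      = (Complex.exp (((α * (x / R + c) ^ 2 : ℝ) : ℂ)) * Cw α R c x) *
        (iteratedDeriv 4 f x - 4 * Cm α R c x * iteratedDeriv 3 f x
          + (6*(Cm α R c x)^2 - 6*(2*(α:ℂ)/(R:ℂ)^2)) * iteratedDeriv 2 f x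
          + (-(4:ℂ)*(Cm α R c x)^3 + 12*(2*(α:ℂ)/(R:ℂ)^2)*(Cm α R c x)) * iteratedDeriv 1 f x
          + ((Cm α R c x)^4 - 6*(2*(α:ℂ)/(R:ℂ)^2)*(Cm α R c x)^2 + 3*(2*(α:ℂ)/(R:ℂ)^2)^2) * f x) := by
        simp only [P4]; ring
    _ = _ := by
        rw [hexp, one_mul]
        simp only [Sop, Aop, Cm, iteratedDeriv_one]
        push_cast
        ring

lemma cont_Sop (α R c : ℝ) {u : ℝ → ℂ} (hu : ContDiff ℝ (⊤ : ℕ∞) u) : Continuous (Sop α R c u) := by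
  have h4 := hu.continuous_iteratedDeriv 4 (WithTop.coe_le_coe.mpr le_top)
  have h2 := hu.continuous_iteratedDeriv 2 (WithTop.coe_le_coe.mpr le_top)
  have h1 : Continuous (deriv u) := by
    simpa [iteratedDeriv_one] using hu.continuous_iteratedDeriv 1 (WithTop.coe_le_coe.mpr le_top)
  have h0 := hu.continuous
  unfold Sop
  fun_prop

lemma cont_Aop (α R c : ℝ) {u : ℝ → ℂ} (hu : ContDiff ℝ (⊤ : ℕ∞) u) : Continuous (Aop α R c u) := by
  have h3 := hu.continuous_iteratedDeriv 3 (WithTop.coe_le_coe.mpr le_top)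
  have h2 := hu.continuous_iteratedDeriv 2 (WithTop.coe_le_coe.mpr le_top)
  have h1 : Continuous (deriv u) := by
    simpa [iteratedDeriv_one] using hu.continuous_iteratedDeriv 1 (WithTop.coe_le_coe.mpr le_top)
  have h0 := hu.continuous
  unfold Aop
  fun_prop

lemma part2 (α R c : ℝ) (f g : ℝ → ℂ) (hf : ContDiff ℝ (⊤ : ℕ∞) f) (hg : ContDiff ℝ (⊤ : ℕ∞) g)
    (hsf : HasCompactSupport f) (hsg : HasCompactSupport g) :
    (∫ x : ℝ, Sop α R c f x * (starRingEnd ℂ) (g x))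
      = ∫ x : ℝ, f x * (starRingEnd ℂ) (Sop α R c g x) := by
  have hd0f : ∀ x, HasDerivAt f (deriv f x) x :=
    fun x => ((hf.differentiable (by simp)) x).hasDerivAt
  have hd1f : ∀ x, HasDerivAt (deriv f) (iteratedDeriv 2 f x) x := by
    intro x; simpa [iteratedDeriv_one] using hd_iter hf 1 x
  have hd2f : ∀ x, HasDerivAt (iteratedDeriv 2 f) (iteratedDeriv 3 f x) x :=
    hd_iter' hf 2 3 rfl
  have hd3f : ∀ x, HasDerivAt (iteratedDeriv 3 f) (iteratedDeriv 4 f x) x :=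
    hd_iter' hf 3 4 rfl
  have cg0d : ∀ x, HasDerivAt (fun y => (starRingEnd ℂ) (g y))
      ((starRingEnd ℂ) (deriv g x)) x :=
    fun x => conj_hasDerivAt (((hg.differentiable (by simp)) x).hasDerivAt)
  have cg1d : ∀ x, HasDerivAt (fun y => (starRingEnd ℂ) (deriv g y))
      ((starRingEnd ℂ) (iteratedDeriv 2 g x)) x := by
    intro x
    exact conj_hasDerivAt (by simpa [iteratedDeriv_one] using hd_iter hg 1 x)
  have cg2d : ∀ x, HasDerivAt (fun y => (starRingEnd ℂ) (iteratedDeriv 2 g y))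
      ((starRingEnd ℂ) (iteratedDeriv 3 g x)) x :=
    fun x => conj_hasDerivAt (hd_iter' hg 2 3 rfl x)
  have cg3d : ∀ x, HasDerivAt (fun y => (starRingEnd ℂ) (iteratedDeriv 3 g y))
      ((starRingEnd ℂ) (iteratedDeriv 4 g x)) x :=
    fun x => conj_hasDerivAt (hd_iter' hg 3 4 rfl x)
  have hGd : ∀ x, HasDerivAt (fun y =>
      iteratedDeriv 3 f y * (starRingEnd ℂ) (g y)
        - iteratedDeriv 2 f y * (starRingEnd ℂ) (deriv g y)
        + deriv f y * (starRingEnd ℂ) (iteratedDeriv 2 g y)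
        - f y * (starRingEnd ℂ) (iteratedDeriv 3 g y)
        + 6 * (Cm α R c y)^2 *
            (deriv f y * (starRingEnd ℂ) (g y) - f y * (starRingEnd ℂ) (deriv g y)))
      (Sop α R c f x * (starRingEnd ℂ) (g x) - f x * (starRingEnd ℂ) (Sop α R c g x)) x := by
    intro x
    have hm2 := hasDerivAt_Cm2 α R c x
    have h := (((((hd3f x).mul (cg0d x)).sub ((hd2f x).mul (cg1d x))).add
        ((hd1f x).mul (cg2d x))).sub ((hd0f x).mul (cg3d x))).add
        ((hm2.const_mul 6).mul
          (((hd1f x).mul (cg0d x)).sub ((hd0f x).mul (cg1d x))))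
    refine h.congr_deriv ?_
    simp only [Sop, map_add, map_mul, map_sub, Complex.conj_ofReal, Cm, Pi.mul_apply, Pi.sub_apply, Pi.add_apply]
    push_cast
    ring
  have hcontE : Continuous (fun x =>
      Sop α R c f x * (starRingEnd ℂ) (g x) - f x * (starRingEnd ℂ) (Sop α R c g x)) :=
    ((cont_Sop α R c hf).mul (cont_conj hg.continuous)).sub
      (hf.continuous.mul (cont_conj (cont_Sop α R c hg)))
  have h1 : HasCompactSupport (fun y => iteratedDeriv 3 f y * (starRingEnd ℂ) (g y)) :=
    (hcs_iter hsf 3).mul_right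
  have h2 : HasCompactSupport (fun y => iteratedDeriv 2 f y * (starRingEnd ℂ) (deriv g y)) :=
    (hcs_iter hsf 2).mul_right
  have h3 : HasCompactSupport (fun y => deriv f y * (starRingEnd ℂ) (iteratedDeriv 2 g y)) :=
    hsf.deriv.mul_right
  have h4 : HasCompactSupport (fun y => f y * (starRingEnd ℂ) (iteratedDeriv 3 g y)) :=
    hsf.mul_right
  have h5 : HasCompactSupport (fun y => 6 * (Cm α R c y)^2 *
      (deriv f y * (starRingEnd ℂ) (g y) - f y * (starRingEnd ℂ) (deriv g y))) :=
    (hcs_sub hsf.deriv.mul_right hsf.mul_right).mul_left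
  have hsG : HasCompactSupport (fun y =>
      iteratedDeriv 3 f y * (starRingEnd ℂ) (g y)
        - iteratedDeriv 2 f y * (starRingEnd ℂ) (deriv g y)
        + deriv f y * (starRingEnd ℂ) (iteratedDeriv 2 g y)
        - f y * (starRingEnd ℂ) (iteratedDeriv 3 g y)
        + 6 * (Cm α R c y)^2 *
            (deriv f y * (starRingEnd ℂ) (g y) - f y * (starRingEnd ℂ) (deriv g y))) :=
    (hcs_sub ((hcs_sub h1 h2).add h3) h4).add h5
  have hcsg : HasCompactSupport (fun x => (starRingEnd ℂ) (g x)) := by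
    exact hsg.comp_left (map_zero _)
  have hi1 : Integrable (fun x => Sop α R c f x * (starRingEnd ℂ) (g x)) :=
    ((cont_Sop α R c hf).mul (cont_conj hg.continuous)).integrable_of_hasCompactSupport
      hcsg.mul_left
  have hi2 : Integrable (fun x => f x * (starRingEnd ℂ) (Sop α R c g x)) :=
    (hf.continuous.mul (cont_conj (cont_Sop α R c hg))).integrable_of_hasCompactSupport
      hsf.mul_right
  have h0 := integral_deriv_zero hGd hcontE hsG
  rw [← sub_eq_zero, ← integral_sub hi1 hi2]
  exact h0

lemma part3 (α R c : ℝ) (f g : ℝ → ℂ) (hf : ContDiff ℝ (⊤ : ℕ∞) f) (hg : ContDiff ℝ (⊤ : ℕ∞) g)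
    (hsf : HasCompactSupport f) (hsg : HasCompactSupport g) :
    (∫ x : ℝ, Aop α R c f x * (starRingEnd ℂ) (g x))
      = -∫ x : ℝ, f x * (starRingEnd ℂ) (Aop α R c g x) := by
  have hd0f : ∀ x, HasDerivAt f (deriv f x) x :=
    fun x => ((hf.differentiable (by simp)) x).hasDerivAt
  have hd1f : ∀ x, HasDerivAt (deriv f) (iteratedDeriv 2 f x) x := by
    intro x; simpa [iteratedDeriv_one] using hd_iter hf 1 x
  have hd2f : ∀ x, HasDerivAt (iteratedDeriv 2 f) (iteratedDeriv 3 f x) x :=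
    hd_iter' hf 2 3 rfl
  have cg0d : ∀ x, HasDerivAt (fun y => (starRingEnd ℂ) (g y))
      ((starRingEnd ℂ) (deriv g x)) x :=
    fun x => conj_hasDerivAt (((hg.differentiable (by simp)) x).hasDerivAt)
  have cg1d : ∀ x, HasDerivAt (fun y => (starRingEnd ℂ) (deriv g y))
      ((starRingEnd ℂ) (iteratedDeriv 2 g x)) x := by
    intro x
    exact conj_hasDerivAt (by simpa [iteratedDeriv_one] using hd_iter hg 1 x)
  have cg2d : ∀ x, HasDerivAt (fun y => (starRingEnd ℂ) (iteratedDeriv 2 g y))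
      ((starRingEnd ℂ) (iteratedDeriv 3 g x)) x :=
    fun x => conj_hasDerivAt (hd_iter' hg 2 3 rfl x)
  have hKd : ∀ x, HasDerivAt (fun y =>
      -(4 * Cm α R c y * (iteratedDeriv 2 f y * (starRingEnd ℂ) (g y)
            + f y * (starRingEnd ℂ) (iteratedDeriv 2 g y)
            - deriv f y * (starRingEnd ℂ) (deriv g y))
        + 2*(2*(α:ℂ)/(R:ℂ)^2) * (deriv f y * (starRingEnd ℂ) (g y)
            + f y * (starRingEnd ℂ) (deriv g y))
        + 4 * (Cm α R c y)^3 * (f y * (starRingEnd ℂ) (g y))))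
      (Aop α R c f x * (starRingEnd ℂ) (g x) + f x * (starRingEnd ℂ) (Aop α R c g x)) x := by
    intro x
    have hm := hasDerivAt_Cm α R c x
    have hm3 := hasDerivAt_Cm3 α R c x
    have hinner := (((hd2f x).mul (cg0d x)).add ((hd0f x).mul (cg2d x))).sub
      ((hd1f x).mul (cg1d x))
    have h := ((((hm.const_mul 4).mul hinner).add
        ((((hd1f x).mul (cg0d x)).add ((hd0f x).mul (cg1d x))).const_mul
          (2*(2*(α:ℂ)/(R:ℂ)^2)))).add
        ((hm3.const_mul 4).mul ((hd0f x).mul (cg0d x)))).neg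
    refine h.congr_deriv ?_
    simp only [Aop, map_add, map_mul, map_sub, map_neg, Complex.conj_ofReal, Cm, Pi.mul_apply, Pi.sub_apply, Pi.add_apply]
    push_cast
    ring
  have hcontE : Continuous (fun x =>
      Aop α R c f x * (starRingEnd ℂ) (g x) + f x * (starRingEnd ℂ) (Aop α R c g x)) :=
    ((cont_Aop α R c hf).mul (cont_conj hg.continuous)).add
      (hf.continuous.mul (cont_conj (cont_Aop α R c hg)))
  have h1 : HasCompactSupport (fun y => 4 * Cm α R c y *
      (iteratedDeriv 2 f y * (starRingEnd ℂ) (g y)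
        + f y * (starRingEnd ℂ) (iteratedDeriv 2 g y)
        - deriv f y * (starRingEnd ℂ) (deriv g y))) :=
    (hcs_sub (((hcs_iter hsf 2).mul_right).add hsf.mul_right)
      hsf.deriv.mul_right).mul_left
  have h2 : HasCompactSupport (fun y => 2*(2*(α:ℂ)/(R:ℂ)^2) *
      (deriv f y * (starRingEnd ℂ) (g y) + f y * (starRingEnd ℂ) (deriv g y))) :=
    ((hsf.deriv.mul_right).add hsf.mul_right).mul_left
  have h3 : HasCompactSupport (fun y => 4 * (Cm α R c y)^3 *
      (f y * (starRingEnd ℂ) (g y))) :=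
    (hsf.mul_right).mul_left
  have hsK : HasCompactSupport (fun y =>
      -(4 * Cm α R c y * (iteratedDeriv 2 f y * (starRingEnd ℂ) (g y)
            + f y * (starRingEnd ℂ) (iteratedDeriv 2 g y)
            - deriv f y * (starRingEnd ℂ) (deriv g y))
        + 2*(2*(α:ℂ)/(R:ℂ)^2) * (deriv f y * (starRingEnd ℂ) (g y)
            + f y * (starRingEnd ℂ) (deriv g y))
        + 4 * (Cm α R c y)^3 * (f y * (starRingEnd ℂ) (g y)))) :=
    hcs_neg ((h1.add h2).add h3)
  have hcsg : HasCompactSupport (fun x => (starRingEnd ℂ) (g x)) := by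
    exact hsg.comp_left (map_zero _)
  have hi1 : Integrable (fun x => Aop α R c f x * (starRingEnd ℂ) (g x)) :=
    ((cont_Aop α R c hf).mul (cont_conj hg.continuous)).integrable_of_hasCompactSupport
      hcsg.mul_left
  have hi2 : Integrable (fun x => f x * (starRingEnd ℂ) (Aop α R c g x)) :=
    (hf.continuous.mul (cont_conj (cont_Aop α R c hg))).integrable_of_hasCompactSupport
      hsf.mul_right
  have h0 := integral_deriv_zero hKd hcontE hsK
  rw [eq_neg_iff_add_eq_zero, ← integral_add hi1 hi2]
  exact h0

/-- The conjugated operator `T f = e^{αψ²} ∂⁴ (e^{-αψ²} f)` decomposes as `S + A`,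
with `S` symmetric and `A` anti-symmetric for the complex `L²` inner product on
compactly supported smooth functions. -/
theorem conjugated_operator_decomposition
    (α R c : ℝ) (hα : 0 < α) (hR : 0 < R) :
    (∀ (f : ℝ → ℂ), ContDiff ℝ (⊤ : ℕ∞) f → ∀ x : ℝ,
        Complex.exp ((α * (x / R + c) ^ 2 : ℝ) : ℂ) *
          iteratedDeriv 4 (fun y => Complex.exp (-((α * (y / R + c) ^ 2 : ℝ) : ℂ)) * f y) x
          = Sop α R c f x + Aop α R c f x)
    ∧ (∀ (f g : ℝ → ℂ), ContDiff ℝ (⊤ : ℕ∞) f → ContDiff ℝ (⊤ : ℕ∞) g →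
        HasCompactSupport f → HasCompactSupport g →
        (∫ x : ℝ, Sop α R c f x * (starRingEnd ℂ) (g x))
          = ∫ x : ℝ, f x * (starRingEnd ℂ) (Sop α R c g x))
    ∧ (∀ (f g : ℝ → ℂ), ContDiff ℝ (⊤ : ℕ∞) f → ContDiff ℝ (⊤ : ℕ∞) g →
        HasCompactSupport f → HasCompactSupport g →
        (∫ x : ℝ, Aop α R c f x * (starRingEnd ℂ) (g x))
          = -∫ x : ℝ, f x * (starRingEnd ℂ) (Aop α R c g x)) := by
  exact ⟨fun f hf x => part1 α R c hf x,
    fun f g hf hg hsf hsg => part2 α R c f g hf hg hsf hsg,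
    fun f g hf hg hsf hsg => part3 α R c f g hf hg hsf hsg⟩
end

section
/- Let α, R > 0, c ∈ ℝ, ψ(x) = x/R + c, and define on smooth compactly supported functions f: ℝ → ℂ the operators S f = f'''' + (24α²ψ²/R²) f'' + (48α²ψ/R³) f' + (16α⁴ψ⁴/R⁴ + 12α²/R⁴) f and A f = −(8αψ/R) f''' − (12α/R²) f'' − (32α³ψ³/R³) f' − (48α³ψ²/R⁴) f. Then the commutator satisfies [S, A] f = S(A f) − A(S f) = (−1536 α⁵ψ²/R⁸ + 2048 α⁷ψ⁶/R⁸) f − (6144 α⁵ψ³/R⁷) f' + (384 α³/R⁶ − 1536 α⁵ψ⁴/R⁶) f'' + (1536 α³ψ/R⁵) f''' + (384 α³ψ²/R⁴) f'''' − (32 α/R²) f''''''. -/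
open Complex

/-- Canonical form: a sum of terms `a * ψ(x)^m * f^(k)(x)` indexed by a list. -/
noncomputable def expr (R c : ℝ) (f : ℝ → ℂ) : List (ℂ × ℕ × ℕ) → ℝ → ℂ
  | [], _ => 0
  | p :: L, x => p.1 * ((x : ℂ) / R + c) ^ p.2.1 * iteratedDeriv p.2.2 f x + expr R c f L x

/-- Formal derivative of the canonical form. -/
noncomputable def Dlist (R : ℝ) : List (ℂ × ℕ × ℕ) → List (ℂ × ℕ × ℕ)
  | [] => []
  | p :: L => (p.1 * p.2.1 / R, p.2.1 - 1, p.2.2) :: (p.1, p.2.1, p.2.2 + 1) :: Dlist R L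

lemma hasDerivAt_expr (R c : ℝ) (f : ℝ → ℂ) (hf : ContDiff ℝ (⊤ : ℕ∞) f)
    (L : List (ℂ × ℕ × ℕ)) (x : ℝ) :
    HasDerivAt (fun y => expr R c f L y) (expr R c f (Dlist R L) x) x := by
  induction L with
  | nil => simpa [expr, Dlist] using hasDerivAt_const x (0 : ℂ)
  | cons p L ih =>
    obtain ⟨a, m, k⟩ := p
    have hψ : HasDerivAt (fun x : ℝ => (x : ℂ) / R + c) (1 / R) x := by
      simpa using ((Complex.ofRealCLM.hasDerivAt (x := x)).div_const (R : ℂ)).add_const (c : ℂ)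
    have hfk : HasDerivAt (iteratedDeriv k f) (iteratedDeriv (k + 1) f x) x := by
      have h1 := (hf.differentiable_iteratedDeriv k (by exact_mod_cast ENat.coe_lt_top k)).differentiableAt (x := x)
      simpa [iteratedDeriv_succ] using h1.hasDerivAt
    have hp : HasDerivAt (fun x : ℝ => ((x : ℂ) / R + c) ^ m)
        ((m : ℂ) * ((x : ℂ) / R + c) ^ (m - 1) * (1 / R)) x := by
      have := (hasDerivAt_pow m ((x : ℂ) / R + c)).comp x hψ
      simpa [mul_comm, Function.comp_def] using this
    have hterm : HasDerivAt (fun x : ℝ => a * ((x : ℂ) / R + c) ^ m * iteratedDeriv k f x)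
        (a * (m : ℂ) / R * ((x : ℂ) / R + c) ^ (m - 1) * iteratedDeriv k f x
          + a * ((x : ℂ) / R + c) ^ m * iteratedDeriv (k + 1) f x) x := by
      have h2 := (hp.mul hfk).const_mul a
      have h3 : (fun y : ℝ => a * (((y : ℂ) / R + c) ^ m * iteratedDeriv k f y))
          = fun y : ℝ => a * ((y : ℂ) / R + c) ^ m * iteratedDeriv k f y := by
        funext y; ring
      simp only [Pi.mul_apply] at h2
      rw [h3] at h2
      refine h2.congr_deriv ?_
      ring
    have := hterm.add ih
    refine this.congr_deriv ?_
    simp only [expr, Dlist]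
    ring

lemma deriv_expr (R c : ℝ) (f : ℝ → ℂ) (hf : ContDiff ℝ (⊤ : ℕ∞) f) (L : List (ℂ × ℕ × ℕ)) :
    deriv (expr R c f L) = expr R c f (Dlist R L) :=
  funext fun y => (hasDerivAt_expr R c f hf L y).deriv

lemma iteratedDeriv_expr (R c : ℝ) (f : ℝ → ℂ) (hf : ContDiff ℝ (⊤ : ℕ∞) f)
    (L : List (ℂ × ℕ × ℕ)) (n : ℕ) :
    iteratedDeriv n (expr R c f L) = expr R c f ((Dlist R)^[n] L) := by
  induction n generalizing L with
  | zero => simp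
  | succ n ih =>
    rw [iteratedDeriv_succ', deriv_expr R c f hf, ih, Function.iterate_succ_apply]

set_option maxHeartbeats 4000000 in
/-- Commutator identity `[S, A] f = S(A f) − A(S f)` for the Carleman operators,
with `ψ(x) = x/R + c`. -/
theorem commutator_S_A
    (α R c : ℝ) (hα : 0 < α) (hR : 0 < R)
    (f : ℝ → ℂ) (hf : ContDiff ℝ (⊤ : ℕ∞) f) (x : ℝ) :
    Sop α R c (Aop α R c f) x - Aop α R c (Sop α R c f) x =
      ((-(1536 * α ^ 5 * (x / R + c) ^ 2 / R ^ 8)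
          + 2048 * α ^ 7 * (x / R + c) ^ 6 / R ^ 8 : ℝ) : ℂ) * f x
      - ((6144 * α ^ 5 * (x / R + c) ^ 3 / R ^ 7 : ℝ) : ℂ) * deriv f x
      + ((384 * α ^ 3 / R ^ 6 - 1536 * α ^ 5 * (x / R + c) ^ 4 / R ^ 6 : ℝ) : ℂ)
          * iteratedDeriv 2 f x
      + ((1536 * α ^ 3 * (x / R + c) / R ^ 5 : ℝ) : ℂ) * iteratedDeriv 3 f x
      + ((384 * α ^ 3 * (x / R + c) ^ 2 / R ^ 4 : ℝ) : ℂ) * iteratedDeriv 4 f x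
      - ((32 * α / R ^ 2 : ℝ) : ℂ) * iteratedDeriv 6 f x := by
  have hR' : (R : ℂ) ≠ 0 := by exact_mod_cast hR.ne'
  set LA : List (ℂ × ℕ × ℕ) :=
    [(-(8 * (α : ℂ) / R), 1, 3), (-(12 * (α : ℂ) / (R : ℂ) ^ 2), 0, 2),
     (-(32 * (α : ℂ) ^ 3 / (R : ℂ) ^ 3), 3, 1), (-(48 * (α : ℂ) ^ 3 / (R : ℂ) ^ 4), 2, 0)]
    with hLA
  set LS : List (ℂ × ℕ × ℕ) :=
    [((1 : ℂ), 0, 4), (24 * (α : ℂ) ^ 2 / (R : ℂ) ^ 2, 2, 2),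
     (48 * (α : ℂ) ^ 2 / (R : ℂ) ^ 3, 1, 1), (16 * (α : ℂ) ^ 4 / (R : ℂ) ^ 4, 4, 0),
     (12 * (α : ℂ) ^ 2 / (R : ℂ) ^ 4, 0, 0)] with hLS
  have hA : Aop α R c f = expr R c f LA := by
    funext y
    simp only [Aop, hLA, expr, iteratedDeriv_one, iteratedDeriv_zero]
    push_cast
    ring
  have hS : Sop α R c f = expr R c f LS := by
    funext y
    simp only [Sop, hLS, expr, iteratedDeriv_one, iteratedDeriv_zero]
    push_cast
    ring
  rw [hA, hS]
  have e4 : iteratedDeriv 4 (expr R c f LA)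
      = expr R c f (Dlist R (Dlist R (Dlist R (Dlist R LA)))) :=
    iteratedDeriv_expr R c f hf LA 4
  have e2 : iteratedDeriv 2 (expr R c f LA) = expr R c f (Dlist R (Dlist R LA)) :=
    iteratedDeriv_expr R c f hf LA 2
  have e1 : deriv (expr R c f LA) = expr R c f (Dlist R LA) := deriv_expr R c f hf LA
  have s3 : iteratedDeriv 3 (expr R c f LS) = expr R c f (Dlist R (Dlist R (Dlist R LS))) :=
    iteratedDeriv_expr R c f hf LS 3
  have s2 : iteratedDeriv 2 (expr R c f LS) = expr R c f (Dlist R (Dlist R LS)) :=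
    iteratedDeriv_expr R c f hf LS 2
  have s1 : deriv (expr R c f LS) = expr R c f (Dlist R LS) := deriv_expr R c f hf LS
  simp only [Sop, Aop, e4, e2, e1, s3, s2, s1]
  simp only [hLA, hLS, Dlist, expr, Nat.reduceAdd, Nat.reduceSub, Nat.reduceMul,
    iteratedDeriv_one, iteratedDeriv_zero, Nat.cast_ofNat, Nat.cast_one, Nat.cast_zero]
  push_cast
  ring
end
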